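/- arXiv:1101.5831 — 2 statements merged into one kernel-verified Lean document; each statement's English description precedes it below -/
import Mathlib

section
/- If φ is an f-structure (φ³ + φ = 0) on a finite-dimensional real vector space V, then the rank of φ is even. -/
/-!
On `W = range φ` the relation `φ³ = -φ` says that `φ` restricts to a complex structure `J`,
`J² = -1`. Taking determinants, `(det J)² = det (-1) = (-1) ^ dim W`, and since `-1` is not a
square in `ℝ`, `dim W` is even.
-/

theorem LinearMap.finrank_even_of_mul_self_eq_neg_one {K V : Type*} [Field K] [AddCommGroup V]
    [Module K V] [FiniteDimensional K V] (hK : ¬IsSquare (-1 : K))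
    {J : Module.End K V} (hJ : J * J = -1) : Even (Module.finrank K V) := by
  by_contra hodd
  have hdet : LinearMap.det J * LinearMap.det J = -1 := by
    rw [← map_mul, hJ, ← neg_one_smul K (1 : Module.End K V), LinearMap.det_smul,
      map_one, mul_one, (Nat.not_even_iff_odd.mp hodd).neg_one_pow]
  exact hK ⟨LinearMap.det J, hdet.symm⟩

theorem LinearMap.restrict_range_mul_self_eq_neg_one {R M : Type*} [CommRing R] [AddCommGroup M]
    [Module R M] {φ : M →ₗ[R] M} (hφ : φ ∘ₗ φ ∘ₗ φ + φ = 0) :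
    let J : Module.End R φ.range := φ.restrict fun x _ ↦ φ.mem_range_self x
    J * J = -1 := by
  ext ⟨_, v, rfl⟩
  exact eq_neg_of_add_eq_zero_left (LinearMap.congr_fun hφ v)

/-- The rank of an f-structure (`φ³ + φ = 0`) on a finite-dimensional real
vector space is even. -/
theorem fStructure_rank_even {V : Type*} [AddCommGroup V] [Module ℝ V]
    [FiniteDimensional ℝ V]
    (φ : V →ₗ[ℝ] V) (hφ : φ ∘ₗ φ ∘ₗ φ + φ = 0) :
    Even (Module.finrank ℝ (LinearMap.range φ)) :=
  LinearMap.finrank_even_of_mul_self_eq_neg_one (not_isSquare_of_neg neg_one_lt_zero)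
    (LinearMap.restrict_range_mul_self_eq_neg_one hφ)
end

section
/- On an almost S-manifold, the bracket {f, g} = X_f·g - (ξ̄·f)g on C∞(M) satisfies the Leibniz-type identity ξᵢ·{f,g} = {ξᵢ·f, g} + {f, ξᵢ·g} for each i. -/
/-!
Since `ξᵢ` commutes with every `X_f` up to `[ξᵢ, X_f] = X_{ξᵢ·f}`, the identity reduces to
`ξᵢ·(ξ̄·h) = ξ̄·(ξᵢ·h)`. The action is not assumed additive in the vector field, so `ξ̄·h`
cannot be split as `Σⱼ ξⱼ·h`; instead it is read off the Hamiltonian field of the constant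
function: `ηʲ(X_1) = 1` gives `Φ(X_h, X_1) = X_1·h - ξ̄·h`. Applying `ξᵢ`, with `L_{ξᵢ}Φ = 0`,
`[ξᵢ, X_1] = X_0` and `Φ(X_h, X_0) = X_0·h`, the `X_0` and `X_1` terms cancel.
-/

theorem act_one_of_leibniz {C V : Type*} [Ring C] {act : V → C → C}
    (hact_mul : ∀ X f g, act X (f * g) = act X f * g + f * act X g) (X : V) : act X 1 = 0 := by
  simpa using hact_mul X 1 1

theorem act_sub_of_add {C V : Type*} [AddGroup C] {act : V → C → C}
    (hact_add : ∀ X f g, act X (f + g) = act X f + act X g) (X : V) (a b : C) :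
    act X (a - b) = act X a - act X b :=
  (AddMonoidHom.mk' (act X) (hact_add X)).map_sub a b

theorem algebraMap_one_div_natCast_mul {C : Type*} [Semiring C] [Algebra ℝ C] {k : ℕ}
    (hk : k ≠ 0) : algebraMap ℝ C (1 / (k : ℝ)) * (k : C) = 1 := by
  rw [← map_natCast (algebraMap ℝ C), ← map_mul, one_div_mul_cancel (Nat.cast_ne_zero.2 hk),
    map_one]

theorem act_act_hamiltonian_of_bracket {C V : Type*} [Ring C] {act : V → C → C}
    {bracket : V → V → V} {Xf : C → V}
    (hact_bracket : ∀ X Y f, act (bracket X Y) f = act X (act Y f) - act Y (act X f))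
    {Z : V} (hcomm : ∀ f, bracket Z (Xf f) = Xf (act Z f)) (f g : C) :
    act Z (act (Xf f) g) = act (Xf (act Z f)) g + act (Xf f) (act Z g) := by
  rw [← hcomm, hact_bracket, sub_add_cancel]

section Hamiltonian

variable {C : Type*} [CommRing C] [Algebra ℝ C] {V : Type*} [AddCommGroup V] {k : ℕ}
  {act : V → C → C} {bracket : V → V → V} {ξ : Fin k → V} {η : Fin k → V → C}
  {Φ : V → V → C} {Xf : C → V}

theorem Φ_hamiltonian_hamiltonian_zero (hXη : ∀ f i, η i (Xf f) = f)
    (hXΦ : ∀ f Y, Φ (Xf f) Y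
      = act Y f - act (∑ i, ξ i) f * (algebraMap ℝ C (1 / (k : ℝ)) * ∑ i, η i Y))
    (h : C) : Φ (Xf h) (Xf 0) = act (Xf 0) h := by
  simp [hXΦ, hXη]

theorem Φ_hamiltonian_hamiltonian_one (hk : k ≠ 0) (hXη : ∀ f i, η i (Xf f) = f)
    (hXΦ : ∀ f Y, Φ (Xf f) Y
      = act Y f - act (∑ i, ξ i) f * (algebraMap ℝ C (1 / (k : ℝ)) * ∑ i, η i Y))
    (h : C) : Φ (Xf h) (Xf 1) = act (Xf 1) h - act (∑ j, ξ j) h := by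
  have hsum : ∑ j, η j (Xf 1) = (k : C) := by simp [hXη]
  rw [hXΦ, hsum, algebraMap_one_div_natCast_mul hk, mul_one]

theorem act_xi_act_sum_xi_comm (hk : k ≠ 0)
    (hact_mul : ∀ X f g, act X (f * g) = act X f * g + f * act X g)
    (hact_add : ∀ X f g, act X (f + g) = act X f + act X g)
    (hact_bracket : ∀ X Y f, act (bracket X Y) f = act X (act Y f) - act Y (act X f))
    (hLΦ : ∀ i X Y, act (ξ i) (Φ X Y) = Φ (bracket (ξ i) X) Y + Φ X (bracket (ξ i) Y))
    (hXη : ∀ f i, η i (Xf f) = f)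
    (hXΦ : ∀ f Y, Φ (Xf f) Y
      = act Y f - act (∑ i, ξ i) f * (algebraMap ℝ C (1 / (k : ℝ)) * ∑ i, η i Y))
    (hcomm : ∀ i f, bracket (ξ i) (Xf f) = Xf (act (ξ i) f)) (i : Fin k) (h : C) :
    act (ξ i) (act (∑ j, ξ j) h) = act (∑ j, ξ j) (act (ξ i) h) := by
  have hΦ1 := Φ_hamiltonian_hamiltonian_one hk hXη hXΦ
  have hξX1 : bracket (ξ i) (Xf 1) = Xf 0 := by rw [hcomm, act_one_of_leibniz hact_mul]
  have hsum : act (∑ j, ξ j) h = act (Xf 1) h - Φ (Xf h) (Xf 1) := by rw [hΦ1]; ring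
  have hX1 := act_act_hamiltonian_of_bracket hact_bracket (hcomm i) 1 h
  rw [act_one_of_leibniz hact_mul] at hX1
  rw [hsum, act_sub_of_add hact_add, hX1, hLΦ, hcomm, hξX1, hΦ1,
    Φ_hamiltonian_hamiltonian_zero hXη hXΦ]
  ring

end Hamiltonian

theorem almostS_bracket_leibniz_general {C : Type*} [CommRing C] [Algebra ℝ C]
    {V : Type*} [AddCommGroup V] {k : ℕ} (hk : k ≠ 0)
    (act : V → C → C) (bracket : V → V → V)
    (ξ : Fin k → V) (η : Fin k → V → C) (Φ : V → V → C)
    -- vector fields act as derivations, compatibly with the bracket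
    (hact_mul : ∀ X f g, act X (f * g) = act X f * g + f * act X g)
    (hact_add : ∀ X f g, act X (f + g) = act X f + act X g)
    (hact_bracket : ∀ X Y f, act (bracket X Y) f = act X (act Y f) - act Y (act X f))
    -- `L_{ξᵢ} Φ = 0`
    (hLΦ : ∀ i X Y, act (ξ i) (Φ X Y) = Φ (bracket (ξ i) X) Y + Φ X (bracket (ξ i) Y))
    -- the Hamiltonian assignment `f ↦ X_f` and its defining properties
    (Xf : C → V)
    (hXη : ∀ f i, η i (Xf f) = f)
    (hXΦ : ∀ f Y, Φ (Xf f) Y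
      = act Y f - act (∑ i, ξ i) f * (algebraMap ℝ C (1 / (k : ℝ)) * ∑ i, η i Y))
    -- previously established: `[ξᵢ, X_f] = X_{ξᵢ·f}`
    (hcomm : ∀ i f, bracket (ξ i) (Xf f) = Xf (act (ξ i) f)) :
    -- THE CONCLUSION: the bracket `{f,g} = X_f·g - (ξ̄·f)g` satisfies the Leibniz-type identity
    -- `ξᵢ·{f,g} = {ξᵢ·f, g} + {f, ξᵢ·g}`
    ∀ i f g,
      act (ξ i) (act (Xf f) g - act (∑ j, ξ j) f * g)
        = (act (Xf (act (ξ i) f)) g - act (∑ j, ξ j) (act (ξ i) f) * g)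
          + (act (Xf f) (act (ξ i) g) - act (∑ j, ξ j) f * act (ξ i) g) := by
  intro i f g
  rw [act_sub_of_add hact_add, act_act_hamiltonian_of_bracket hact_bracket (hcomm i), hact_mul,
    act_xi_act_sum_xi_comm hk hact_mul hact_add hact_bracket hLΦ hXη hXΦ hcomm]
  ring

/-- Algebraic model of an almost `S`-manifold: `C` is the ring of smooth
functions, `V` the `C`-module of vector fields with bracket and action
`act X f = X·f` on functions, `ξᵢ` the Reeb fields, `ηⁱ` the dual 1-forms and
`Φ` the fundamental 2-form, with `Φ = -dηⁱ`, `[ξᵢ,ξⱼ] = 0`, `L_{ξᵢ}ηʲ = 0`,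
`L_{ξᵢ}Φ = 0`.  The Hamiltonian vector field `X_f` is the unique vector field
with `ηⁱ(X_f) = f` for all `i` and `ι(X_f)Φ = df - (ξ̄·f)η̄`, where
`ξ̄ = Σᵢ ξᵢ` and `η̄ = (1/k)Σᵢ ηⁱ`.  The bracket `{f,g} = X_f·g - (ξ̄·f)g`
on functions satisfies `ξᵢ·{f,g} = {ξᵢ·f, g} + {f, ξᵢ·g}` for each `i`. -/
theorem almostS_bracket_leibniz {C : Type*} [CommRing C] [Algebra ℝ C]
    {V : Type*} [AddCommGroup V] [Module C V] {k : ℕ} (hk : k ≠ 0)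
    (act : V → C → C) (bracket : V → V → V)
    (ξ : Fin k → V) (η : Fin k → V → C) (Φ : V → V → C)
    -- vector fields act as derivations, compatibly with the bracket
    (hact_mul : ∀ X f g, act X (f * g) = act X f * g + f * act X g)
    (hact_add : ∀ X f g, act X (f + g) = act X f + act X g)
    (hact_bracket : ∀ X Y f, act (bracket X Y) f = act X (act Y f) - act Y (act X f))
    -- `Φ = -dηⁱ` for each `i`
    (hΦdη : ∀ i X Y, Φ X Y = -(act X (η i Y) - act Y (η i X) - η i (bracket X Y)))
    -- `[ξᵢ, ξⱼ] = 0`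
    (hξξ : ∀ i j, bracket (ξ i) (ξ j) = 0)
    -- `L_{ξᵢ} ηʲ = 0`
    (hLη : ∀ i j Y, act (ξ i) (η j Y) = η j (bracket (ξ i) Y))
    -- `L_{ξᵢ} Φ = 0`
    (hLΦ : ∀ i X Y, act (ξ i) (Φ X Y) = Φ (bracket (ξ i) X) Y + Φ X (bracket (ξ i) Y))
    -- the Hamiltonian assignment `f ↦ X_f` and its defining properties
    (Xf : C → V)
    (hXη : ∀ f i, η i (Xf f) = f)
    (hXΦ : ∀ f Y, Φ (Xf f) Y
      = act Y f - act (∑ i, ξ i) f * (algebraMap ℝ C (1 / (k : ℝ)) * ∑ i, η i Y))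
    -- uniqueness of the Hamiltonian vector field
    (hXuniq : ∀ (f : C) (Z : V), (∀ i, η i Z = f) →
      (∀ Y, Φ Z Y = act Y f - act (∑ i, ξ i) f * (algebraMap ℝ C (1 / (k : ℝ)) * ∑ i, η i Y)) →
      Z = Xf f)
    -- previously established: `[ξᵢ, X_f] = X_{ξᵢ·f}`
    (hcomm : ∀ i f, bracket (ξ i) (Xf f) = Xf (act (ξ i) f)) :
    -- THE CONCLUSION: the bracket `{f,g} = X_f·g - (ξ̄·f)g` satisfies the Leibniz-type identity
    -- `ξᵢ·{f,g} = {ξᵢ·f, g} + {f, ξᵢ·g}`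
    ∀ i f g,
      act (ξ i) (act (Xf f) g - act (∑ j, ξ j) f * g)
        = (act (Xf (act (ξ i) f)) g - act (∑ j, ξ j) (act (ξ i) f) * g)
          + (act (Xf f) (act (ξ i) g) - act (∑ j, ξ j) f * act (ξ i) g) :=
  almostS_bracket_leibniz_general hk act bracket ξ η Φ hact_mul hact_add hact_bracket hLΦ Xf hXη hXΦ
    hcomm
end
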